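/- arXiv:1906.11342 — 2 statements merged into one kernel-verified Lean document; each statement's English description precedes it below -/
import Mathlib

section
/- Let n ≥ 3 and k ≥ 1, and let (x, c, u) be a combinatorial degenerated magic polygon D(n,k). Then the root label satisfies c = (k²·(n−2)+k+2)/2. -/
/-- The labeling function of a combinatorial degenerated magic polygon `D(n,k)`:
the labels `x t p` of the points on the `k` polygons (root vertex excluded)
together with the root label `c`. -/
def degMagicLabels (n k : ℕ) (x : Fin k → Fin (k * (n - 2) + 1) → ℕ) (c : ℕ) :
    (Fin k × Fin (k * (n - 2) + 1)) ⊕ Unit → ℕ :=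
  Sum.elim (fun q => x q.1 q.2) (fun _ => c)

/-- `(x, c, u)` is a combinatorial degenerated magic polygon `D(n,k)`:
(1) the `k²(n−2)+k+1` labels are exactly `1, …, k²(n−2)+k+1`, each occurring once;
(2) every edge sum `∑_{j=0}^{k} x t (i·k + j)`, for an edge not adjacent to the
root (`0 ≤ i ≤ n−3`), equals `u`;
(3) for every position `p`, the sum `(∑ t, x t p) + c` along the segment joining
the root vertex to the boundary of the largest polygon equals `u`. -/
def IsDegMagicPolygon (n k : ℕ) (x : Fin k → Fin (k * (n - 2) + 1) → ℕ) (c u : ℕ) : Prop :=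
  Function.Injective (degMagicLabels n k x c) ∧
  Set.range (degMagicLabels n k x c) = Set.Icc 1 (k ^ 2 * (n - 2) + k + 1) ∧
  (∀ t : Fin k, ∀ i ∈ Finset.range (n - 2),
    ∑ j ∈ Finset.range (k + 1), x t (Fin.ofNat (k * (n - 2) + 1) (i * k + j : ℕ)) = u) ∧
  (∀ p : Fin (k * (n - 2) + 1), (∑ t : Fin k, x t p) + c = u)

/-!
Summing the segment sums over the `k + 1` positions of a first edge gives `k·u + (k+1)·c = (k+1)·u`,
i.e. `u = (k+1)·c`. Summing them over all `k(n−2)+1` positions then shows that the sum of all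
`N = k²(n−2)+k+1` labels is `N·c`; since the labels are `1, …, N`, that sum is `N(N+1)/2`,
so `2c = N + 1`.
-/

theorem two_mul_sum_Icc_one_id (N : ℕ) : 2 * ∑ i ∈ Finset.Icc 1 N, i = N * (N + 1) := by
  induction N with
  | zero => simp
  | succ N ih => rw [Finset.sum_Icc_succ_top (by omega), mul_add, ih]; ring

theorem two_mul_sum_eq_of_injective_of_range_eq_Icc {ι : Type*} [Fintype ι] {f : ι → ℕ}
    (hf : Function.Injective f) {N : ℕ} (hrange : Set.range f = Set.Icc 1 N) :
    2 * ∑ i, f i = N * (N + 1) := by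
  have himage : Finset.univ.image f = Finset.Icc 1 N := by
    rw [← Finset.coe_inj, Finset.coe_image, Finset.coe_univ, Set.image_univ, hrange,
      Finset.coe_Icc]
  rw [← two_mul_sum_Icc_one_id, ← himage, Finset.sum_image fun a _ b _ hab => hf hab]

theorem sum_degMagicLabels (n k : ℕ) (x : Fin k → Fin (k * (n - 2) + 1) → ℕ) (c : ℕ) :
    ∑ q, degMagicLabels n k x c q = (∑ t, ∑ p, x t p) + c := by
  simp [degMagicLabels, Fintype.sum_sum_type, Fintype.sum_prod_type]

namespace IsDegMagicPolygon

variable {n k : ℕ} {x : Fin k → Fin (k * (n - 2) + 1) → ℕ} {c u : ℕ}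

theorem two_mul_sum_labels (h : IsDegMagicPolygon n k x c u) :
    2 * ((∑ t, ∑ p, x t p) + c) = (k ^ 2 * (n - 2) + k + 1) * (k ^ 2 * (n - 2) + k + 2) := by
  rw [← sum_degMagicLabels]
  exact two_mul_sum_eq_of_injective_of_range_eq_Icc h.1 h.2.1

theorem sum_segments (h : IsDegMagicPolygon n k x c u) {ι : Type*} (s : Finset ι)
    (g : ι → Fin (k * (n - 2) + 1)) :
    ∑ t, ∑ i ∈ s, x t (g i) + s.card * c = s.card * u := by
  have hsegments := Finset.sum_congr rfl fun i (_ : i ∈ s) => h.2.2.2 (g i)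
  rwa [Finset.sum_add_distrib, Finset.sum_comm, Finset.sum_const, Finset.sum_const,
    smul_eq_mul, smul_eq_mul] at hsegments

/-- The first edge of every polygon covers exactly the positions `0, …, k`, so summing the segment
sums there counts `k` edge sums and `k + 1` copies of `c`. -/
theorem magicSum_eq (h : IsDegMagicPolygon n k x c u) (hn : 3 ≤ n) : u = (k + 1) * c := by
  have hedges : ∀ t, ∑ j ∈ Finset.range (k + 1), x t (Fin.ofNat _ j) = u := fun t => by
    simpa using h.2.2.1 t 0 (by simp; omega)
  have hsegments := h.sum_segments (Finset.range (k + 1)) (Fin.ofNat _)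
  simp only [hedges, Finset.sum_const, Finset.card_univ, Fintype.card_fin, smul_eq_mul,
    Finset.card_range] at hsegments
  nlinarith

theorem sum_labels_eq (h : IsDegMagicPolygon n k x c u) (hn : 3 ≤ n) :
    (∑ t, ∑ p, x t p) + c = (k ^ 2 * (n - 2) + k + 1) * c := by
  have hsegments := h.sum_segments Finset.univ id
  simp only [id, Finset.card_univ, Fintype.card_fin, h.magicSum_eq hn] at hsegments
  nlinarith

end IsDegMagicPolygon

theorem degMagicPolygon_rootLabel_general (n k : ℕ) (hn : 3 ≤ n)
    (x : Fin k → Fin (k * (n - 2) + 1) → ℕ) (c u : ℕ)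
    (h : IsDegMagicPolygon n k x c u) :
    c = (k ^ 2 * (n - 2) + k + 2) / 2 := by
  have htotal := h.two_mul_sum_labels
  rw [h.sum_labels_eq hn, mul_left_comm] at htotal
  have h2c := Nat.eq_of_mul_eq_mul_left (by positivity) htotal
  omega

theorem degMagicPolygon_rootLabel (n k : ℕ) (hn : 3 ≤ n) (hk : 1 ≤ k)
    (x : Fin k → Fin (k * (n - 2) + 1) → ℕ) (c u : ℕ)
    (h : IsDegMagicPolygon n k x c u) :
    c = (k ^ 2 * (n - 2) + k + 2) / 2 :=
  degMagicPolygon_rootLabel_general n k hn x c u h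
end

section
/- For every integer n ≥ 3 there exists a combinatorial degenerated magic polygon D(n,2); that is, there exist labels x : Fin 2 → Fin (2(n−2)+1) → ℕ, a root label c, and a magic sum u satisfying the defining conditions. -/
/-!
Put the middle label `c = 2(n-2)+2` of `1, …, 2c-1` at the root, label the first polygon by a row
`a` and the second by its reflection `2c - a`. Every radial sum is then `3c`, reflection preserves
edge sums equal to `3c`, and the labels are exactly `1, …, 2c-1` as soon as `a` is injective and
takes one value from each pair `{v, 2c - v}`. So it suffices to find one such row whose edge
sums are `3c`.
-/

open Finset Function

def mirrorRows {N : ℕ} (c : ℕ) (a : Fin N → ℕ) : Fin 2 → Fin N → ℕ :=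
  ![a, fun p => 2 * c - a p]

lemma range_eq_Icc_of_injective {α : Type*} [Fintype α] {f : α → ℕ} {N : ℕ}
    (hf : Injective f) (hmem : ∀ a, f a ∈ Set.Icc 1 N) (hcard : Fintype.card α = N) :
    Set.range f = Set.Icc 1 N := by
  have himage : univ.image f = Icc 1 N :=
    eq_of_subset_of_card_le (fun v hv => by
      obtain ⟨a, -, rfl⟩ := mem_image.mp hv
      exact mem_Icc.mpr (hmem a))
      (by rw [card_image_of_injective _ hf, card_univ, hcard, Nat.card_Icc, Nat.add_sub_cancel])
  rw [← coe_Icc, ← himage, coe_image, coe_univ, Set.image_univ]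

section Mirror

variable {n c : ℕ} {a : Fin (2 * (n - 2) + 1) → ℕ}

@[simp] lemma mirrorRows_zero : mirrorRows c a 0 = a := rfl

@[simp] lemma mirrorRows_one (p : Fin (2 * (n - 2) + 1)) : mirrorRows c a 1 p = 2 * c - a p := rfl

lemma injective_degMagicLabels_mirrorRows (ha : Injective a) (hlt : ∀ p, a p < 2 * c)
    (hpair : ∀ p q, a p + a q ≠ 2 * c) :
    Injective (degMagicLabels n 2 (mirrorRows c a) c) := by
  have hmid : ∀ p, a p ≠ c := fun p h => hpair p p (by omega)
  rintro (⟨t, p⟩ | ⟨⟩) (⟨s, q⟩ | ⟨⟩) h <;>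
    simp only [degMagicLabels, Sum.elim_inl, Sum.elim_inr] at h
  · have := hlt p; have := hlt q; have := hpair p q
    fin_cases t <;> fin_cases s <;>
      simp only [Fin.zero_eta, Fin.mk_one, mirrorRows_zero, mirrorRows_one] at h ⊢
    · rw [ha h]
    · omega
    · omega
    · rw [ha (by omega : a p = a q)]
  · have := hlt p; have := hmid p
    fin_cases t <;>
      simp only [Fin.zero_eta, Fin.mk_one, mirrorRows_zero, mirrorRows_one] at h <;> omega
  · have := hlt q; have := hmid q
    fin_cases s <;>
      simp only [Fin.zero_eta, Fin.mk_one, mirrorRows_zero, mirrorRows_one] at h <;> omega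
  · rfl

lemma range_degMagicLabels_mirrorRows (hc : c = 2 * (n - 2) + 2) (ha : Injective a)
    (hpos : ∀ p, 0 < a p) (hlt : ∀ p, a p < 2 * c) (hpair : ∀ p q, a p + a q ≠ 2 * c) :
    Set.range (degMagicLabels n 2 (mirrorRows c a) c) = Set.Icc 1 (2 ^ 2 * (n - 2) + 2 + 1) := by
  refine range_eq_Icc_of_injective (injective_degMagicLabels_mirrorRows ha hlt hpair) ?_ ?_
  · rintro (⟨t, p⟩ | ⟨⟩) <;> simp only [degMagicLabels, Sum.elim_inl, Sum.elim_inr, Set.mem_Icc]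
    · have := hpos p; have := hlt p; have := hpair p p
      fin_cases t <;>
        simp only [Fin.zero_eta, Fin.mk_one, mirrorRows_zero, mirrorRows_one] <;> omega
    · omega
  · simp only [Fintype.card_sum, Fintype.card_prod, Fintype.card_fin, Fintype.card_unit]
    ring

lemma sum_mirrorRows_add (p : Fin (2 * (n - 2) + 1)) (hlt : a p < 2 * c) :
    (∑ t : Fin 2, mirrorRows c a t p) + c = 3 * c := by
  rw [Fin.sum_univ_two, mirrorRows_zero, mirrorRows_one]
  omega

theorem isDegMagicPolygon_mirrorRows (hc : c = 2 * (n - 2) + 2) (ha : Injective a)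
    (hpos : ∀ p, 0 < a p) (hlt : ∀ p, a p < 2 * c) (hpair : ∀ p q, a p + a q ≠ 2 * c)
    (hedge : ∀ i ∈ range (n - 2),
      ∑ j ∈ range 3, a (Fin.ofNat (2 * (n - 2) + 1) (i * 2 + j)) = 3 * c) :
    IsDegMagicPolygon n 2 (mirrorRows c a) c (3 * c) := by
  refine ⟨injective_degMagicLabels_mirrorRows ha hlt hpair,
    range_degMagicLabels_mirrorRows hc ha hpos hlt hpair, fun t i hi => ?_,
    fun p => sum_mirrorRows_add p (hlt p)⟩
  fin_cases t
  · exact hedge i hi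
  · simp only [Fin.mk_one, mirrorRows_one]
    rw [sum_tsub_distrib _ fun j _ => (hlt _).le, sum_const, card_range, hedge i hi, smul_eq_mul]
    omega

end Mirror

/-- The vertex labels alternate between the runs `3m+3, 3m+4, …` and `1, 2, …`, and the edge
midpoints are `3m+2, 3m+1, …`: passing to the next edge, the midpoint loses one and the vertex pair
gains one, so all edge sums agree. -/
def rowLabel (m p : ℕ) : ℕ :=
  if p % 2 = 1 then 3 * m + 2 - p / 2
  else if p % 4 = 0 then 3 * m + 3 + p / 4
  else p / 4 + 1

lemma rowLabel_pos {m p : ℕ} (hp : p ≤ 2 * m) : 0 < rowLabel m p := by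
  unfold rowLabel; split_ifs <;> omega

lemma rowLabel_lt {m p : ℕ} (hp : p ≤ 2 * m) : rowLabel m p < 2 * (2 * m + 2) := by
  unfold rowLabel; split_ifs <;> omega

lemma rowLabel_injOn (m : ℕ) : Set.InjOn (rowLabel m) (Set.Iic (2 * m)) := by
  intro p hp q hq h
  simp only [Set.mem_Iic] at hp hq
  unfold rowLabel at h; split_ifs at h <;> omega

lemma rowLabel_add_ne {m p q : ℕ} (hp : p ≤ 2 * m) (hq : q ≤ 2 * m) :
    rowLabel m p + rowLabel m q ≠ 2 * (2 * m + 2) := by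
  unfold rowLabel; split_ifs <;> omega

lemma rowLabel_edge {m i : ℕ} (hi : i < m) :
    rowLabel m (i * 2) + rowLabel m (i * 2 + 1) + rowLabel m (i * 2 + 2) = 3 * (2 * m + 2) := by
  unfold rowLabel; split_ifs <;> omega

theorem degMagicPolygon_existence_two_general (n : ℕ) :
    ∃ (x : Fin 2 → Fin (2 * (n - 2) + 1) → ℕ) (c u : ℕ),
      IsDegMagicPolygon n 2 x c u := by
  have hp (p : Fin (2 * (n - 2) + 1)) : (p : ℕ) ≤ 2 * (n - 2) := Nat.le_of_lt_succ p.isLt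
  refine ⟨_, _, _, isDegMagicPolygon_mirrorRows (a := fun p => rowLabel (n - 2) p) rfl
    (fun p q h => Fin.ext (rowLabel_injOn _ (hp p) (hp q) h)) (fun p => rowLabel_pos (hp p))
    (fun p => rowLabel_lt (hp p)) (fun p q => rowLabel_add_ne (hp p) (hp q)) fun i hi => ?_⟩
  have hi : i < n - 2 := mem_range.mp hi
  have hval (j : ℕ) (hj : j ≤ 2) : (Fin.ofNat (2 * (n - 2) + 1) (i * 2 + j) : ℕ) = i * 2 + j :=
    Nat.mod_eq_of_lt (by omega)
  simp only [sum_range_succ, sum_range_zero, zero_add, hval 0 (by omega), hval 1 (by omega),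
    hval 2 (by omega)]
  exact rowLabel_edge hi

theorem degMagicPolygon_existence_two (n : ℕ) (hn : 3 ≤ n) :
    ∃ (x : Fin 2 → Fin (2 * (n - 2) + 1) → ℕ) (c u : ℕ),
      IsDegMagicPolygon n 2 x c u :=
  degMagicPolygon_existence_two_general n
end
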